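/- Assume K is an integral domain and |W| is invertible in K. Let _χM denote the W-submodule of M generated by all elements χ(σ)z − σz (σ ∈ W, z ∈ M). Then the union of the two families (e_i − χ(σ)⁻¹γ_i(σ)·e_{σi}), for i ∈ I*, σ ∈ W^{(i)} with σ ∉ W_i, and (e_i), for i ∈ J₀(χ,M), is a basis of the K-module _χM. -/

import Mathlib

noncomputable section

/-- The monomial action of `σ ∈ W` on the free module `I →₀ K`,
determined by `σ • e_i = γ_i(σ) • e_{σ i}`. -/
def monAct {K : Type*} [CommRing K] {W : Type*} [Group W] {I : Type*} [MulAction W I]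
    (γ : I → W → Kˣ) (σ : W) : (I →₀ K) →ₗ[K] (I →₀ K) :=
  Finsupp.lsum K fun i => ((γ i σ : Kˣ) : K) • Finsupp.lsingle (σ • i)

/-- The averaging operator
`a_χ = |W|⁻¹ Σ_{σ ∈ W} χ(σ)⁻¹ σ`, where `u` is the unit `|W|` of `K`. -/
def aChi {K : Type*} [CommRing K] {W : Type*} [Group W] [Fintype W] {I : Type*}
    [MulAction W I] (γ : I → W → Kˣ) (χ : W →* Kˣ) (u : Kˣ) :
    (I →₀ K) →ₗ[K] (I →₀ K) :=
  ((u⁻¹ : Kˣ) : K) • ∑ σ : W, (((χ σ)⁻¹ : Kˣ) : K) • monAct γ σ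

/-- The set `I(χ,M)`: those `i ∈ I` such that `γ_i = χ` on the stabilizer `W_i`. -/
def Ichi {K : Type*} [CommRing K] {W : Type*} [Group W] {I : Type*} [MulAction W I]
    (γ : I → W → Kˣ) (χ : W →* Kˣ) : Set I :=
  {i | ∀ σ : W, σ • i = i → γ i σ = χ σ}

/-- The `W`-submodule `_χM` of `M = I →₀ K` generated by the elements
`χ(σ) z − σ z` (as a `K`-submodule; the generating set is `W`-stable
up to such differences, so this agrees with the `W`-submodule generated). -/
def chiDiffSub {K : Type*} [CommRing K] {W : Type*} [Group W] {I : Type*}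
    [MulAction W I] (γ : I → W → Kˣ) (χ : W →* Kˣ) : Submodule K (I →₀ K) :=
  Submodule.span K {x | ∃ (σ : W) (z : I →₀ K),
    x = ((χ σ : Kˣ) : K) • z - monAct γ σ z}

/-- The submodule `M_χ = {z ∈ M | σ z = χ(σ) z for all σ ∈ W}`. -/
def chiFixSub {K : Type*} [CommRing K] {W : Type*} [Group W] {I : Type*}
    [MulAction W I] (γ : I → W → Kˣ) (χ : W →* Kˣ) : Submodule K (I →₀ K) where
  carrier := {z | ∀ σ : W, monAct γ σ z = ((χ σ : Kˣ) : K) • z}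
  add_mem' := by
    intro a b ha hb σ
    rw [map_add, ha σ, hb σ, smul_add]
  zero_mem' := by
    intro σ
    rw [map_zero, smul_zero]
  smul_mem' := by
    intro c a ha σ
    rw [map_smul, ha σ, smul_comm]

/-! Modulo the span `V` of the family, `σ e_k ≡ χ(σ) e_k` for every orbit representative
`k ∈ I*`: write `σ = τ ρ` with `τ ∈ W^{(k)}` and `ρ ∈ W_k`; if `γ_k = χ` on `W_k`, then
`σ e_k = χ(ρ) τ e_k` and the pair vector of `(k, τ)` finishes, otherwise `e_k ∈ V` and so
`e_{τ k} ∈ V`. The cocycle identity makes `σ ↦ monAct γ σ` an action, which carries the congruence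
along orbits, so `_χM ≤ V`. Conversely, if `γ_k ≠ χ` on `W_k`, averaging `χ(ρ)⁻¹ (χ(ρ) e_k - ρ e_k)`
over `ρ ∈ W_k` gives `|W_k| e_k ∈ _χM`, because the nontrivial character `ρ ↦ χ(ρ)⁻¹ γ_k(ρ)` sums
to zero in a domain; and `|W_k|` divides the unit `|W|`. Linear independence is triangularity. -/

section

variable {K : Type*} [CommRing K] {W : Type*} [Group W] {I : Type*} [MulAction W I]
  (γ : I → W → Kˣ) (χ : W →* Kˣ)

def IsCocycle : Prop :=
  ∀ (i : I) (σ τ : W), γ i (σ * τ) = γ (τ • i) σ * γ i τ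

@[simp]
lemma monAct_single (σ : W) (j : I) (c : K) :
    monAct γ σ (Finsupp.single j c) = ((γ j σ : Kˣ) : K) • Finsupp.single (σ • j) c := by
  simp [monAct]

variable {γ} in
lemma monAct_mul (hγ : IsCocycle γ) (σ τ : W) (z : I →₀ K) :
    monAct γ (σ * τ) z = monAct γ σ (monAct γ τ z) := by
  induction z using Finsupp.induction_linear with
  | zero => simp
  | add f g hf hg => simp only [map_add, hf, hg]
  | single j c =>
    rw [monAct_single, monAct_single, map_smul, monAct_single, smul_smul, hγ, Units.val_mul,
      mul_smul σ τ j, mul_comm]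

def chiDiff (σ : W) : (I →₀ K) →ₗ[K] (I →₀ K) :=
  ((χ σ : Kˣ) : K) • LinearMap.id - monAct γ σ

lemma chiDiff_apply (σ : W) (z : I →₀ K) :
    chiDiff γ χ σ z = ((χ σ : Kˣ) : K) • z - monAct γ σ z := rfl

lemma chiDiff_mem_chiDiffSub (σ : W) (z : I →₀ K) : chiDiff γ χ σ z ∈ chiDiffSub γ χ :=
  Submodule.subset_span ⟨σ, z, rfl⟩

lemma chiDiffSub_eq_span_single :
    chiDiffSub γ χ =
      Submodule.span K (Set.range fun p : I × W => chiDiff γ χ p.2 (Finsupp.single p.1 1)) := by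
  refine le_antisymm (Submodule.span_le.mpr ?_) (Submodule.span_le.mpr ?_)
  · rintro _ ⟨σ, z, rfl⟩
    have hz : z ∈ Submodule.span K (Set.range fun j : I => Finsupp.single j (1 : K)) := by
      rw [← Finsupp.coe_basisSingleOne, Finsupp.basisSingleOne.span_eq]; trivial
    have := Submodule.mem_map_of_mem (f := chiDiff γ χ σ) hz
    rw [Submodule.map_span, ← Set.range_comp] at this
    refine Submodule.span_mono ?_ this
    rintro _ ⟨j, rfl⟩
    exact ⟨(j, σ), rfl⟩
  · rintro _ ⟨p, rfl⟩
    exact chiDiff_mem_chiDiffSub γ χ _ _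

end

section

variable {K : Type*} [CommRing K] {W : Type*} [Group W] {I : Type*} [MulAction W I]
  {γ : I → W → Kˣ} (χ : W →* Kˣ)

def stabilizerHomOfCocycle (hγ : IsCocycle γ) (i : I) : MulAction.stabilizer W i →* Kˣ :=
  MonoidHom.mk' (fun ρ => γ i ρ) fun ρ ρ' => by
    rw [Subgroup.coe_mul, hγ, MulAction.mem_stabilizer_iff.mp ρ'.2]

lemma single_mem_chiDiffSub_of_not_mem_Ichi [IsDomain K] [Fintype W]
    (hcard : IsUnit (Fintype.card W : K)) (hγ : IsCocycle γ) {i : I} (hi : i ∉ Ichi γ χ) :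
    Finsupp.single i (1 : K) ∈ chiDiffSub γ χ := by
  classical
  set H := MulAction.stabilizer W i
  set ψ : H →* K := (Units.coeHom K).comp (stabilizerHomOfCocycle hγ i / χ.comp H.subtype)
  have hψ : ψ ≠ 1 := by
    contrapose! hi
    intro σ hσ
    have := congrArg (· ⟨σ, hσ⟩) hi
    simpa [ψ, stabilizerHomOfCocycle, div_eq_one, Units.val_eq_one] using this
  have hH : IsUnit (Fintype.card H : K) := by
    refine isUnit_of_dvd_unit ?_ hcard
    rw [← Nat.card_eq_fintype_card, ← Nat.card_eq_fintype_card]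
    exact Nat.cast_dvd_cast (Subgroup.card_subgroup_dvd_card H)
  have hsum : ∑ ρ : H, (χ ρ)⁻¹ • chiDiff γ χ ρ (Finsupp.single i 1) =
      (Fintype.card H : K) • Finsupp.single i 1 := by
    have hterm : ∀ ρ : H, (χ ρ)⁻¹ • chiDiff γ χ ρ (Finsupp.single i 1) =
        (1 - ψ ρ) • Finsupp.single i (1 : K) := by
      intro ρ
      rw [chiDiff_apply, monAct_single, MulAction.mem_stabilizer_iff.mp ρ.2, ← sub_smul,
        Units.smul_def, smul_smul, mul_sub, ← Units.val_mul, inv_mul_cancel, Units.val_one]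
      simp [ψ, stabilizerHomOfCocycle, div_eq_mul_inv, mul_comm]
    rw [Finset.sum_congr rfl fun ρ _ => hterm ρ, ← Finset.sum_smul, Finset.sum_sub_distrib,
      sum_hom_units_eq_zero ψ hψ, Finset.sum_const, Finset.card_univ, nsmul_one, sub_zero]
  have hmem : (Fintype.card H : K) • Finsupp.single i (1 : K) ∈ chiDiffSub γ χ :=
    hsum ▸ Submodule.sum_mem _ fun ρ _ => Submodule.smul_mem_iff' _ _ |>.mpr
      (chiDiff_mem_chiDiffSub γ χ _ _)
  exact (Submodule.smul_mem_iff_of_isUnit _ hH).mp hmem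

end

section

variable {K : Type*} [CommRing K] {W : Type*} [Group W] {I : Type*} [MulAction W I]
  {γ : I → W → Kˣ} {χ : W →* Kˣ}

lemma chiDiff_monAct (hγ : IsCocycle γ) (σ g : W) (z : I →₀ K) :
    chiDiff γ χ σ (monAct γ g z) = chiDiff γ χ (σ * g) z - ((χ σ : Kˣ) : K) • chiDiff γ χ g z := by
  simp only [chiDiff_apply, monAct_mul hγ, map_mul, Units.val_mul, smul_sub, smul_smul]
  abel

lemma chiDiff_single_mem_of_mem_orbit (hγ : IsCocycle γ) {V : Submodule K (I →₀ K)} {k j : I}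
    (hj : j ∈ MulAction.orbit W k) (hk : ∀ σ, chiDiff γ χ σ (Finsupp.single k 1) ∈ V) (σ : W) :
    chiDiff γ χ σ (Finsupp.single j 1) ∈ V := by
  obtain ⟨g, rfl⟩ := hj
  have hsingle : Finsupp.single (g • k) (1 : K) =
      (((γ k g)⁻¹ : Kˣ) : K) • monAct γ g (Finsupp.single k 1) := by
    rw [monAct_single, smul_smul, ← Units.val_mul, inv_mul_cancel, Units.val_one, one_smul]
  rw [hsingle, map_smul, chiDiff_monAct hγ]
  exact V.smul_mem _ (V.sub_mem (hk _) (V.smul_mem _ (hk g)))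

lemma chiDiff_single_mem_of_rep (hγ : IsCocycle γ) {V : Submodule K (I →₀ K)} {k : I} {R : Set W}
    (hR : ∀ σ, ∃ τ ∈ R, τ⁻¹ * σ ∈ MulAction.stabilizer W k)
    (hpair : ∀ τ ∈ R, τ ∉ MulAction.stabilizer W k → chiDiff γ χ τ (Finsupp.single k 1) ∈ V)
    (hk : k ∉ Ichi γ χ → Finsupp.single k 1 ∈ V) (σ : W) :
    chiDiff γ χ σ (Finsupp.single k 1) ∈ V := by
  obtain ⟨τ, hτR, hρ⟩ := hR σ
  set ρ := τ⁻¹ * σ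
  have hσ : σ = τ * ρ := by simp [ρ]
  have hρk : ρ • k = k := hρ
  by_cases hkI : k ∈ Ichi γ χ
  · have hρe : monAct γ ρ (Finsupp.single k 1) = ((χ ρ : Kˣ) : K) • Finsupp.single k (1 : K) := by
      rw [monAct_single, hρk, hkI ρ hρk]
    have hτρ : chiDiff γ χ σ (Finsupp.single k 1) =
        ((χ ρ : Kˣ) : K) • chiDiff γ χ τ (Finsupp.single k 1) := by
      rw [hσ, chiDiff_apply, chiDiff_apply, monAct_mul hγ, hρe, map_smul, map_mul, Units.val_mul,
        smul_sub, smul_smul, mul_comm]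
    rw [hτρ]
    refine V.smul_mem _ ?_
    by_cases hτ : τ ∈ MulAction.stabilizer W k
    · rw [chiDiff_apply, monAct_single, MulAction.mem_stabilizer_iff.mp hτ, hkI τ hτ, sub_self]
      exact V.zero_mem
    · exact hpair τ hτR hτ
  · have hek := hk hkI
    have heτ : Finsupp.single (τ • k) (1 : K) ∈ V := by
      by_cases hτ : τ ∈ MulAction.stabilizer W k
      · rwa [MulAction.mem_stabilizer_iff.mp hτ]
      · have h := hpair τ hτR hτ
        rw [chiDiff_apply, monAct_single] at h
        have h' := V.sub_mem (V.smul_mem ((χ τ : Kˣ) : K) hek) h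
        rw [sub_sub_cancel] at h'
        exact (V.smul_mem_iff_of_isUnit (γ k τ).isUnit).mp h'
    rw [chiDiff_apply, monAct_single, hσ, mul_smul, hρk]
    exact V.sub_mem (V.smul_mem _ hek) (V.smul_mem _ heτ)

lemma chiDiffSub_le (hγ : IsCocycle γ)
    {V : Submodule K (I →₀ K)} {Istar : Set I}
    (hIstar : ∀ i : I, ∃ k ∈ Istar, k ∈ MulAction.orbit W i) {rep : I → Set W}
    (hrep : ∀ k σ, ∃ τ ∈ rep k, τ⁻¹ * σ ∈ MulAction.stabilizer W k)
    (hpair : ∀ k ∈ Istar, ∀ τ ∈ rep k, τ ∉ MulAction.stabilizer W k →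
      chiDiff γ χ τ (Finsupp.single k 1) ∈ V)
    (hJ₀ : ∀ k ∈ Istar, k ∉ Ichi γ χ → Finsupp.single k 1 ∈ V) :
    chiDiffSub γ χ ≤ V := by
  rw [chiDiffSub_eq_span_single, Submodule.span_le]
  rintro _ ⟨⟨j, σ⟩, rfl⟩
  obtain ⟨k, hk, hkj⟩ := hIstar j
  exact chiDiff_single_mem_of_mem_orbit hγ (MulAction.mem_orbit_symm.mp hkj)
    (chiDiff_single_mem_of_rep hγ (hrep k) (hpair k hk) (hJ₀ k hk)) σ

end

lemma eq_zero_of_sum_smul_eq_zero_of_pivot {ι α R : Type*} [Semiring R] {v : ι → α →₀ R}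
    {s : Finset ι} {f : ι → R} (hsum : ∑ j ∈ s, f j • v j = 0) {i : ι} (hi : i ∈ s) {a : α}
    (hia : IsUnit (v i a)) (hother : ∀ j ∈ s, j ≠ i → f j = 0 ∨ v j a = 0) : f i = 0 := by
  have hcoord := congrArg (· a) hsum
  simp only [Finsupp.finsetSum_apply, Finsupp.smul_apply, smul_eq_mul, Finsupp.coe_zero,
    Pi.zero_apply] at hcoord
  rw [Finset.sum_eq_single_of_mem i hi fun j hj hji => by
    rcases hother j hj hji with h | h <;> simp [h]] at hcoord
  exact hia.mul_left_eq_zero.mp hcoord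

section

variable {K : Type*} [CommRing K] {W : Type*} [Group W] {I : Type*} [MulAction W I]

def chiDiffFamily (γ : I → W → Kˣ) (χ : W →* Kˣ) (Istar : Set I) (rep : I → Set W) :
    ({p : I × W // p.1 ∈ Istar ∧ p.2 ∈ rep p.1 ∧ p.2 ∉ MulAction.stabilizer W p.1}
      ⊕ {i : I // i ∈ Istar ∧ i ∉ Ichi γ χ}) → (I →₀ K) :=
  Sum.elim
    (fun p => Finsupp.single p.1.1 (1 : K) -
      ((((χ p.1.2)⁻¹ * γ p.1.1 p.1.2 : Kˣ)) : K) • Finsupp.single (p.1.2 • p.1.1) 1)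
    (fun i => Finsupp.single i.1 1)

variable {γ : I → W → Kˣ} {χ : W →* Kˣ} {Istar : Set I} {rep : I → Set W}

lemma chiDiffFamily_inl (p : {p : I × W // p.1 ∈ Istar ∧ p.2 ∈ rep p.1 ∧
      p.2 ∉ MulAction.stabilizer W p.1}) :
    chiDiffFamily γ χ Istar rep (Sum.inl p) =
      (((χ p.1.2)⁻¹ : Kˣ) : K) • chiDiff γ χ p.1.2 (Finsupp.single p.1.1 1) := by
  rw [chiDiffFamily, Sum.elim_inl, chiDiff_apply, monAct_single, smul_sub, smul_smul, smul_smul,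
    ← Units.val_mul, inv_mul_cancel, Units.val_one, one_smul, ← Units.val_mul]

lemma linearIndependent_chiDiffFamily
    (hIstar : ∀ k ∈ Istar, ∀ k' ∈ Istar, k' ∈ MulAction.orbit W k → k' = k)
    (hrep : ∀ k, ∀ τ ∈ rep k, ∀ τ' ∈ rep k, τ • k = τ' • k → τ = τ') :
    LinearIndependent K (chiDiffFamily γ χ Istar rep) := by
  classical
  have hmoved : ∀ k ∈ Istar, ∀ τ : W, τ • k ∈ Istar → τ • k = k := fun k hk τ hτk =>
    hIstar k hk _ hτk ⟨τ, rfl⟩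
  rw [linearIndependent_iff']
  intro s f hsum
  -- The coordinate at `τ • k` sees only the pair `(k, τ)`, as `τ • k ∉ I*`.
  have hinl : ∀ p, Sum.inl p ∈ s → f (Sum.inl p) = 0 := by
    rintro ⟨⟨k, τ⟩, hk, hτ, hτk⟩ hp
    have hτk' : τ • k ≠ k := hτk
    refine eq_zero_of_sum_smul_eq_zero_of_pivot hsum hp (a := τ • k) ?_ ?_
    · simp [chiDiffFamily, hτk'.symm]
    · rintro (⟨⟨k', τ'⟩, hk', hτ', _⟩ | ⟨j, hj, _⟩) - hne <;> right
      · have hk'τ : k' ≠ τ • k := fun h => hτk' (hmoved k hk τ (h ▸ hk'))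
        have hτ'τ : τ' • k' ≠ τ • k := by
          intro h
          have hkk' : k = k' := hIstar k' hk' k hk ⟨τ⁻¹ * τ', by
            show (τ⁻¹ * τ') • k' = k
            rw [mul_smul, h, inv_smul_smul]⟩
          subst hkk'
          obtain rfl := hrep k τ' hτ' τ hτ h
          exact hne rfl
        simp [chiDiffFamily, hk'τ, hτ'τ]
      · have hjτ : j ≠ τ • k := fun h => hτk' (hmoved k hk τ (h ▸ hj))
        simp [chiDiffFamily, hjτ]
  rintro (p | ⟨j, hj⟩) hjs
  · exact hinl p hjs
  · refine eq_zero_of_sum_smul_eq_zero_of_pivot hsum hjs (a := j) (by simp [chiDiffFamily]) ?_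
    rintro (q | ⟨j', hj'⟩) hq hne
    · exact Or.inl (hinl q hq)
    · refine Or.inr ?_
      have hj'j : j' ≠ j := fun h => hne (by subst h; rfl)
      simp [chiDiffFamily, hj'j]

end

lemma span_chiDiffFamily {K : Type*} [CommRing K] [IsDomain K] {W : Type*} [Group W] [Fintype W]
    {I : Type*} [MulAction W I] (hcard : IsUnit (Fintype.card W : K)) {γ : I → W → Kˣ}
    (hγ : IsCocycle γ) (χ : W →* Kˣ) {Istar : Set I}
    (hIstar : ∀ i : I, ∃ k ∈ Istar, k ∈ MulAction.orbit W i) {rep : I → Set W}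
    (hrep : ∀ k σ, ∃ τ ∈ rep k, τ⁻¹ * σ ∈ MulAction.stabilizer W k) :
    Submodule.span K (Set.range (chiDiffFamily γ χ Istar rep)) = chiDiffSub γ χ := by
  refine le_antisymm (Submodule.span_le.mpr ?_) (chiDiffSub_le hγ hIstar hrep ?_ ?_)
  · rintro _ ⟨p | i, rfl⟩
    · rw [chiDiffFamily_inl]
      exact Submodule.smul_mem _ _ (chiDiff_mem_chiDiffSub γ χ _ _)
    · exact single_mem_chiDiffSub_of_not_mem_Ichi χ hcard hγ i.2.2
  · intro k hk τ hτ hτk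
    have hmem := Submodule.subset_span (R := K)
      ⟨Sum.inl ⟨(k, τ), hk, hτ, hτk⟩, rfl⟩ (s := Set.range (chiDiffFamily γ χ Istar rep))
    rw [chiDiffFamily_inl] at hmem
    exact (Submodule.smul_mem_iff_of_isUnit _ (χ τ)⁻¹.isUnit).mp hmem
  · intro k hk hkI
    exact Submodule.subset_span ⟨Sum.inr ⟨k, hk, hkI⟩, rfl⟩

/-- Theorem II.6 (i). If `K` is an integral domain and
`|W| ∈ U(K)`, then the union of the families
`e_i − χ(σ)⁻¹ γ_i(σ) e_{σ i}` (for `i ∈ I*`, `σ ∈ W^{(i)}`, `σ ∉ W_i`) and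
`e_i` (for `i ∈ J₀(χ,M) = I* ∖ I(χ,M)`) is a basis of `_χM`. -/
theorem basis_of_chiDiffSub {K : Type*} [CommRing K] [IsDomain K]
    {W : Type*} [Group W] [Fintype W] {I : Type*} [MulAction W I]
    (hcard : IsUnit ((Fintype.card W : K)))
    (γ : I → W → Kˣ) (hγ : ∀ (i : I) (σ τ : W), γ i (σ * τ) = γ (τ • i) σ * γ i τ)
    (χ : W →* Kˣ)
    (Istar : Set I)
    (hIstar : ∀ i : I, ∃! j, j ∈ Istar ∧ j ∈ MulAction.orbit W i)
    (rep : I → Set W)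
    (hrep : ∀ i : I, ∀ σ : W, ∃! τ, τ ∈ rep i ∧ τ⁻¹ * σ ∈ MulAction.stabilizer W i)
    (v : ({p : I × W // p.1 ∈ Istar ∧ p.2 ∈ rep p.1 ∧ p.2 ∉ MulAction.stabilizer W p.1}
          ⊕ {i : I // i ∈ Istar ∧ i ∉ Ichi γ χ}) → (I →₀ K))
    (hv : v = Sum.elim
      (fun p => Finsupp.single p.1.1 (1 : K) -
        ((((χ p.1.2)⁻¹ * γ p.1.1 p.1.2 : Kˣ)) : K) • Finsupp.single (p.1.2 • p.1.1) 1)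
      (fun i => Finsupp.single i.1 1)) :
    LinearIndependent K v ∧ Submodule.span K (Set.range v) = chiDiffSub γ χ := by
  subst hv
  have hIstar_unique : ∀ k ∈ Istar, ∀ k' ∈ Istar, k' ∈ MulAction.orbit W k → k' = k :=
    fun k hk k' hk' hk'k => (hIstar k).unique ⟨hk', hk'k⟩ ⟨hk, MulAction.mem_orbit_self k⟩
  have hrep_unique : ∀ k, ∀ τ ∈ rep k, ∀ τ' ∈ rep k, τ • k = τ' • k → τ = τ' :=
    fun k τ hτ τ' hτ' h => (hrep k τ).unique ⟨hτ, by simp⟩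
      ⟨hτ', by rw [MulAction.mem_stabilizer_iff, mul_smul, h, inv_smul_smul]⟩
  exact ⟨linearIndependent_chiDiffFamily hIstar_unique hrep_unique,
    span_chiDiffFamily hcard hγ χ (fun i => (hIstar i).exists) (fun k σ => (hrep k σ).exists)⟩
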